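/- Let p be an odd prime and f : ℤ_p → ℚ_p uniformly differentiable. For any continuous g : ℤ_p → ℚ_p, ∫_{ℤ_p} g dμ_{f,-1} = I_{-1}(f·g), i.e., lim_{n→∞} ∑_{i=0}^{p^n-1} g(i)·μ_{f,-1}(i + p^n ℤ_p) = lim_{n→∞} ∑_{i=0}^{p^n-1} f(i)·g(i)·(-1)^i, provided both limits exist. -/

import Mathlib

/-
Split `range (p ^ m)` into the balls `a + p ^ n ℤ_p`. On one ball the sum defining
`μ_{f,-1}(a + p ^ n ℤ_p)` is `(-1) ^ a` times an alternating sum of `f (a + j p ^ n)` over an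
odd number `p ^ (m - n)` of indices `j`; since such an alternating sum of ones equals `1`,
uniform continuity of `f` makes it `ε`-close to `f a`, uniformly in `a` and `m`. Pairing these
estimates with the bounded values of `g` and using the ultrametric inequality, the two
Riemann sums differ by at most `ε · sup ‖g‖` for large `n`, so their limits agree.
-/

open Finset Filter

/-- `f : ℤ_p → ℚ_p` is uniformly differentiable: the difference quotients
converge uniformly to a derivative function. -/
def UniformlyDifferentiable (p : ℕ) [Fact p.Prime] (f : ℤ_[p] → ℚ_[p]) : Prop :=
  ∃ f' : ℤ_[p] → ℚ_[p], ∀ ε : ℝ, 0 < ε → ∃ δ : ℝ, 0 < δ ∧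
    ∀ x y : ℤ_[p], x ≠ y → ‖x - y‖ < δ →
      ‖(f x - f y) / ((x : ℚ_[p]) - (y : ℚ_[p])) - f' x‖ < ε

open Topology

theorem UniformlyDifferentiable.continuous {p : ℕ} [Fact p.Prime] {f : ℤ_[p] → ℚ_[p]}
    (hf : UniformlyDifferentiable p f) : Continuous f := by
  obtain ⟨f', hf'⟩ := hf
  refine continuous_iff_continuousAt.2 fun x => ?_
  obtain ⟨δ, hδ, hquot⟩ := hf' 1 one_pos
  have hlip : ∀ y, ‖x - y‖ < δ → ‖f x - f y‖ ≤ (‖f' x‖ + 1) * ‖x - y‖ := by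
    intro y hy
    rcases eq_or_ne x y with rfl | hxy
    · simp
    have hsub : (x : ℚ_[p]) - y ≠ 0 := sub_ne_zero.2 (Subtype.coe_injective.ne hxy)
    have hq : ‖(f x - f y) / ((x : ℚ_[p]) - y)‖ ≤ ‖f' x‖ + 1 :=
      (norm_le_norm_add_norm_sub' _ (f' x)).trans (by linarith [hquot x y hxy hy])
    calc ‖f x - f y‖ = ‖(f x - f y) / ((x : ℚ_[p]) - y)‖ * ‖x - y‖ := by
          rw [PadicInt.norm_def, PadicInt.coe_sub, ← norm_mul, div_mul_cancel₀ _ hsub]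
      _ ≤ (‖f' x‖ + 1) * ‖x - y‖ := by gcongr
  rw [ContinuousAt, tendsto_iff_norm_sub_tendsto_zero]
  have hsmall : Tendsto (fun y => (‖f' x‖ + 1) * ‖x - y‖) (𝓝 x) (𝓝 0) := by
    simpa [norm_sub_rev] using (tendsto_norm_sub_self x).const_mul (‖f' x‖ + 1)
  refine squeeze_zero' (.of_forall fun _ => norm_nonneg _) ?_ hsmall
  filter_upwards [Metric.ball_mem_nhds x hδ] with y hy
  rw [norm_sub_rev (f y)]
  exact hlip y (by rwa [Metric.mem_ball, dist_eq_norm, ← norm_neg, neg_sub] at hy)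

theorem Finset.sum_range_mul_ite_mod_eq {M : Type*} [AddCommMonoid M] (F : ℕ → M) {q a : ℕ}
    (ha : a < q) (K : ℕ) :
    ∑ x ∈ range (K * q), (if x % q = a then F x else 0) = ∑ j ∈ range K, F (a + j * q) := by
  induction K with
  | zero => simp
  | succ K ih =>
    have hlast : ∑ y ∈ range q, (if (K * q + y) % q = a then F (K * q + y) else 0)
        = F (a + K * q) := by
      rw [sum_congr rfl fun y hy => by rw [Nat.mul_comm K, Nat.mul_add_mod,
        Nat.mod_eq_of_lt (mem_range.1 hy)], sum_ite_eq', if_pos (mem_range.2 ha), Nat.mul_comm q,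
        Nat.add_comm]
    rw [Nat.succ_mul, sum_range_add, ih, hlast, sum_range_succ]

theorem sum_neg_one_pow_mul_sub_of_odd {R : Type*} [Ring R] {K : ℕ} (hK : Odd K) (b : ℕ → R)
    (c : R) : ∑ j ∈ range K, (-1) ^ j * (b j - c) = ∑ j ∈ range K, (-1) ^ j * b j - c := by
  rw [← Nat.not_even_iff_odd] at hK
  simp only [mul_sub, sum_sub_distrib, ← sum_mul, neg_one_geom_sum, if_neg hK, one_mul]

theorem norm_sum_neg_one_pow_mul_sub_le_of_odd {𝕜 : Type*} [NormedField 𝕜] [IsUltrametricDist 𝕜]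
    {K : ℕ} (hK : Odd K) {b : ℕ → 𝕜} {c : 𝕜} {ε : ℝ} (hε : 0 ≤ ε)
    (hb : ∀ j ∈ range K, ‖b j - c‖ ≤ ε) : ‖∑ j ∈ range K, (-1) ^ j * b j - c‖ ≤ ε := by
  rw [← sum_neg_one_pow_mul_sub_of_odd hK]
  refine IsUltrametricDist.norm_sum_le_of_forall_le_of_nonneg hε fun j hj => ?_
  simpa using hb j hj

theorem tendsto_sum_mul_of_isBounded_range {𝕜 α ι : Type*} [NormedField 𝕜]
    [IsUltrametricDist 𝕜] {l : Filter α} {s : α → Finset ι} {g : ι → 𝕜} {a : α → ι → 𝕜}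
    (hg : Bornology.IsBounded (Set.range g))
    (ha : ∀ ε > 0, ∀ᶠ n in l, ∀ i ∈ s n, ‖a n i‖ ≤ ε) :
    Tendsto (fun n => ∑ i ∈ s n, g i * a n i) l (𝓝 0) := by
  obtain ⟨C, hC, hgC⟩ := hg.exists_pos_norm_le
  refine Metric.tendsto_nhds.2 fun ε hε => ?_
  filter_upwards [ha (ε / (2 * C)) (by positivity)] with n hn
  rw [dist_zero_right]
  calc ‖∑ i ∈ s n, g i * a n i‖ ≤ C * (ε / (2 * C)) := by
        refine IsUltrametricDist.norm_sum_le_of_forall_le_of_nonneg (by positivity) fun i hi => ?_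
        rw [norm_mul]
        gcongr
        exacts [hgC _ ⟨i, rfl⟩, hn i hi]
    _ < ε := by field_simp; linarith

theorem PadicInt.eventually_dist_natCast_add_mul_pow_lt {p : ℕ} [hp : Fact p.Prime] {δ : ℝ}
    (hδ : 0 < δ) : ∀ᶠ n in atTop, ∀ a j : ℕ, dist ((a + j * p ^ n : ℕ) : ℤ_[p]) a < δ := by
  have hp1 : ‖(p : ℤ_[p])‖ < 1 := by
    rw [PadicInt.norm_p]; exact inv_lt_one_of_one_lt₀ (by exact_mod_cast hp.out.one_lt)
  filter_upwards [(tendsto_pow_atTop_nhds_zero_of_lt_one (norm_nonneg _) hp1).eventually_lt_const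
    hδ] with n hn a j
  calc dist ((a + j * p ^ n : ℕ) : ℤ_[p]) a = ‖(j : ℤ_[p]) * (p : ℤ_[p]) ^ n‖ := by
        rw [dist_eq_norm]; push_cast; ring_nf
    _ ≤ ‖(p : ℤ_[p])‖ ^ n := by
        rw [norm_mul, norm_pow]
        exact mul_le_of_le_one_left (by positivity) (PadicInt.norm_le_one _)
    _ < δ := hn

section Fermionic

variable {p : ℕ} [Fact p.Prime]

/-- The Riemann sum at level `m` of the measure `μ_{f,-1}(a + p ^ n ℤ_p)`. -/
noncomputable def fermionicBallSum (f : ℤ_[p] → ℚ_[p]) (n a m : ℕ) : ℚ_[p] :=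
  ∑ x ∈ range (p ^ m), if x % p ^ n = a % p ^ n then f (x : ℤ_[p]) * (-1 : ℚ_[p]) ^ x else 0

theorem fermionicBallSum_eq (f : ℤ_[p] → ℚ_[p]) {n a m : ℕ} (ha : a < p ^ n) (hnm : n ≤ m) :
    fermionicBallSum f n a m =
      ∑ j ∈ range (p ^ (m - n)), f ((a + j * p ^ n : ℕ) : ℤ_[p]) * (-1) ^ (a + j * p ^ n) := by
  rw [fermionicBallSum, Nat.mod_eq_of_lt ha, ← Nat.pow_sub_mul_pow p hnm]
  exact sum_range_mul_ite_mod_eq (fun x => f (x : ℤ_[p]) * (-1) ^ x) ha _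

theorem norm_fermionicBallSum_sub_le (hodd : Odd p) {f : ℤ_[p] → ℚ_[p]} {n a m : ℕ}
    (ha : a < p ^ n) (hnm : n ≤ m) {ε : ℝ} (hε : 0 ≤ ε)
    (hf : ∀ j : ℕ, ‖f ((a + j * p ^ n : ℕ) : ℤ_[p]) - f a‖ ≤ ε) :
    ‖fermionicBallSum f n a m - f a * (-1) ^ a‖ ≤ ε := by
  have hsign : ∀ j : ℕ, (-1 : ℚ_[p]) ^ (a + j * p ^ n) = (-1) ^ a * (-1) ^ j := fun j => by
    rw [pow_add, pow_mul', (hodd.pow : Odd (p ^ n)).neg_one_pow]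
  calc ‖fermionicBallSum f n a m - f a * (-1) ^ a‖
        = ‖(-1 : ℚ_[p]) ^ a * (∑ j ∈ range (p ^ (m - n)),
            (-1) ^ j * f ((a + j * p ^ n : ℕ) : ℤ_[p]) - f a)‖ := by
        rw [fermionicBallSum_eq f ha hnm, mul_sub, mul_sum]
        simp only [hsign]
        ring_nf
    _ = ‖∑ j ∈ range (p ^ (m - n)), (-1) ^ j * f ((a + j * p ^ n : ℕ) : ℤ_[p]) - f a‖ := by
        simp
    _ ≤ ε := norm_sum_neg_one_pow_mul_sub_le_of_odd hodd.pow hε fun j _ => hf j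

theorem eventually_norm_sub_le_of_tendsto_fermionicBallSum (hodd : Odd p)
    {f : ℤ_[p] → ℚ_[p]} (hf : UniformContinuous f) {μ : ℕ → ℕ → ℚ_[p]}
    (hμ : ∀ n a, Tendsto (fermionicBallSum f n a) atTop (𝓝 (μ n a))) {ε : ℝ} (hε : 0 < ε) :
    ∀ᶠ n in atTop, ∀ a < p ^ n, ‖μ n a - f a * (-1) ^ a‖ ≤ ε := by
  obtain ⟨δ, hδ, hfδ⟩ := Metric.uniformContinuous_iff.1 hf ε hε
  filter_upwards [PadicInt.eventually_dist_natCast_add_mul_pow_lt (p := p) hδ] with n hn a ha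
  refine le_of_tendsto ((hμ n a).sub_const _).norm (eventually_atTop.2 ⟨n, fun m hm => ?_⟩)
  exact norm_fermionicBallSum_sub_le hodd ha hm hε.le fun j => by
    rw [← dist_eq_norm]; exact (hfδ (hn a j)).le

end Fermionic

theorem radon_nikodym_fermionic (p : ℕ) [hp : Fact p.Prime] (hodd : Odd p)
    (f : ℤ_[p] → ℚ_[p]) (hfUD : UniformlyDifferentiable p f)
    (g : ℤ_[p] → ℚ_[p]) (hg : Continuous g)
    (μ : ℕ → ℕ → ℚ_[p])
    (hμ : ∀ n a : ℕ, Tendsto (fun m => ∑ x ∈ Finset.range (p ^ m),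
        if x % p ^ n = a % p ^ n then f (x : ℤ_[p]) * (-1 : ℚ_[p]) ^ x else 0)
      atTop (nhds (μ n a)))
    (L M : ℚ_[p])
    (hL : Tendsto (fun n => ∑ i ∈ Finset.range (p ^ n),
        f (i : ℤ_[p]) * g (i : ℤ_[p]) * (-1 : ℚ_[p]) ^ i) atTop (nhds L))
    (hM : Tendsto (fun n => ∑ i ∈ Finset.range (p ^ n),
        g (i : ℤ_[p]) * μ n i) atTop (nhds M)) :
    M = L := by
  have hf : UniformContinuous f := CompactSpace.uniformContinuous_of_continuous hfUD.continuous
  have hgb : Bornology.IsBounded (Set.range fun i : ℕ => g i) :=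
    (isCompact_range hg).isBounded.subset (Set.range_comp_subset_range _ _)
  have hdiff : Tendsto (fun n => ∑ i ∈ range (p ^ n), g i * (μ n i - f i * (-1) ^ i))
      atTop (𝓝 0) :=
    tendsto_sum_mul_of_isBounded_range hgb fun ε hε =>
      (eventually_norm_sub_le_of_tendsto_fermionicBallSum hodd hf hμ hε).mono
        fun n hn i hi => hn i (mem_range.1 hi)
  have hML : Tendsto (fun n => ∑ i ∈ range (p ^ n), g i * μ n i) atTop (𝓝 (0 + L)) :=
    (hdiff.add hL).congr fun n => by
      rw [← sum_add_distrib]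
      exact sum_congr rfl fun i _ => by ring
  exact tendsto_nhds_unique hM (by simpa using hML)
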